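/- Let S be an inverse semigroup and ρ a left congruence on S. If the ρ-class of the idempotent a⁻¹a is the singleton {a⁻¹a}, then the ρ-class of a is the singleton {a}. -/

import Mathlib

class InverseSemigroup (S : Type*) extends Semigroup S where
  inv : S → S
  mul_inv_mul : ∀ a : S, a * inv a * a = a
  inv_mul_inv : ∀ a : S, inv a * a * inv a = inv a
  inv_unique : ∀ a b : S, a * b * a = a → b * a * b = b → b = inv a

open InverseSemigroup

/-- `e` is an idempotent. -/
def IsIdem {S : Type*} [Mul S] (e : S) : Prop := e * e = e

/-- `r` is a left congruence: an equivalence relation compatible with left multiplication. -/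
def IsLeftCongruence {S : Type*} [Semigroup S] (r : S → S → Prop) : Prop :=
  Equivalence r ∧ ∀ a b c : S, r a b → r (c * a) (c * b)

/-- The inverse kernel of a relation: elements related to `a * a⁻¹`. -/
def InK {S : Type*} [InverseSemigroup S] (r : S → S → Prop) : Set S :=
  {a | r a (a * inv a)}

/-- The kernel: elements related to some idempotent. -/
def lker {S : Type*} [InverseSemigroup S] (r : S → S → Prop) : Set S :=
  {a | ∃ e, IsIdem e ∧ r a e}

/-- `τ` is a congruence on the semilattice of idempotents `E(S)`. -/
def IsECong {S : Type*} [InverseSemigroup S] (τ : S → S → Prop) : Prop :=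
  (∀ e f, τ e f → IsIdem e ∧ IsIdem f) ∧
  (∀ e, IsIdem e → τ e e) ∧
  (∀ e f, τ e f → τ f e) ∧
  (∀ e f g, τ e f → τ f g → τ e g) ∧
  (∀ e f g, IsIdem g → τ e f → τ (g * e) (g * f))

/-- The normaliser of a congruence on the idempotents. -/
def normaliser {S : Type*} [InverseSemigroup S] (τ : S → S → Prop) : Set S :=
  {a | ∀ e f, τ e f → τ (a * e * inv a) (a * f * inv a) ∧ τ (inv a * e * a) (inv a * f * a)}

/-- `T` is a full inverse subsemigroup of `S`. -/
def IsFullInverseSub {S : Type*} [InverseSemigroup S] (T : Set S) : Prop :=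
  (∀ e : S, IsIdem e → e ∈ T) ∧ (∀ a b, a ∈ T → b ∈ T → a * b ∈ T) ∧
  (∀ a, a ∈ T → inv a ∈ T)

/-! Idempotents of an inverse semigroup commute, so `inv` reverses products. If `a ρ b`, left
multiplication by `inv a` and by `inv b` puts `inv a * b` and `inv b * b` in the singleton class of
`inv a * a`; then `a` and `b` lie below each other in the natural partial order. -/

namespace InverseSemigroup

variable {S : Type*} [InverseSemigroup S]

theorem inv_inv (a : S) : inv (inv a) = a :=
  (inv_unique (inv a) a (inv_mul_inv a) (mul_inv_mul a)).symm

theorem isIdem_mul_inv (a : S) : IsIdem (a * inv a) := by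
  rw [IsIdem, ← mul_assoc, mul_inv_mul]

theorem isIdem_inv_mul (a : S) : IsIdem (inv a * a) := by
  rw [IsIdem, ← mul_assoc, inv_mul_inv]

theorem IsIdem.mul_self_mul {e : S} (he : IsIdem e) (x : S) : e * (e * x) = e * x := by
  rw [← mul_assoc, he]

theorem IsIdem.inv_eq {e : S} (he : IsIdem e) : inv e = e := by
  have h : e * e * e = e := by rw [he, he]
  exact (inv_unique e e h h).symm

theorem IsIdem.mul {e f : S} (he : IsIdem e) (hf : IsIdem f) : IsIdem (e * f) := by
  set x := inv (e * f)
  have hx₁ : e * f * x * (e * f) = e * f := mul_inv_mul (e * f)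
  have hx₂ : x * (e * f) * x = x := inv_mul_inv (e * f)
  -- `f * x * e` is another inverse of `e * f`, hence equals `x`
  have hx : f * x * e = x := by
    apply inv_unique
    · simp only [mul_assoc, he.mul_self_mul, hf.mul_self_mul] at hx₁ ⊢
      exact hx₁
    · calc f * x * e * (e * f) * (f * x * e) = f * (x * (e * f) * x) * e := by
            simp only [mul_assoc, he.mul_self_mul, hf.mul_self_mul]
        _ = f * x * e := by rw [hx₂, mul_assoc]
  have hx_idem : IsIdem x := by
    calc x * x = f * (x * (e * f) * x) * e := by
          conv_lhs => rw [← hx]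
          simp only [mul_assoc]
      _ = x := by rw [hx₂, hx]
  rwa [← inv_inv (e * f), hx_idem.inv_eq]

theorem IsIdem.mul_comm {e f : S} (he : IsIdem e) (hf : IsIdem f) : e * f = f * e := by
  have hfe : f * e = inv (e * f) := by
    apply inv_unique
    · calc e * f * (f * e) * (e * f) = e * f * (e * f) := by
            simp only [mul_assoc, he.mul_self_mul, hf.mul_self_mul]
        _ = e * f := he.mul hf
    · calc f * e * (e * f) * (f * e) = f * e * (f * e) := by
            simp only [mul_assoc, he.mul_self_mul, hf.mul_self_mul]
        _ = f * e := hf.mul he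
  rw [hfe, (he.mul hf).inv_eq]

theorem mul_inv_rev (a b : S) : inv (a * b) = inv b * inv a := by
  have hcomm := (isIdem_mul_inv b).mul_comm (isIdem_inv_mul a)
  symm
  apply inv_unique
  · calc a * b * (inv b * inv a) * (a * b) = a * (b * inv b * (inv a * a)) * b := by
          simp only [mul_assoc]
      _ = a * inv a * a * (b * inv b * b) := by rw [hcomm]; simp only [mul_assoc]
      _ = a * b := by rw [mul_inv_mul, mul_inv_mul]
  · calc inv b * inv a * (a * b) * (inv b * inv a)
          = inv b * (inv a * a * (b * inv b)) * inv a := by simp only [mul_assoc]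
      _ = inv b * b * inv b * (inv a * a * inv a) := by rw [← hcomm]; simp only [mul_assoc]
      _ = inv b * inv a := by rw [inv_mul_inv, inv_mul_inv]

def NaturalLE (a b : S) : Prop := ∃ e, IsIdem e ∧ a = e * b

theorem naturalLE_of_inv_mul_eq {a b : S} (h : inv a * b = inv a * a) : NaturalLE a b :=
  ⟨a * inv a, isIdem_mul_inv a, by rw [mul_assoc, h, ← mul_assoc, mul_inv_mul]⟩

theorem NaturalLE.antisymm {a b : S} (hab : NaturalLE a b) (hba : NaturalLE b a) : a = b := by
  obtain ⟨e, he, rfl⟩ := hab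
  obtain ⟨f, hf, hb⟩ := hba
  calc e * b = e * (f * (e * b)) := by rw [← hb]
    _ = f * (e * (e * b)) := by rw [← mul_assoc, he.mul_comm hf, mul_assoc]
    _ = b := by rw [he.mul_self_mul, ← hb]

end InverseSemigroup

theorem stmt18 {S : Type*} [InverseSemigroup S] (r : S → S → Prop)
    (hr : IsLeftCongruence r) (a : S)
    (ha : ∀ b : S, r (inv a * a) b → b = inv a * a) :
    ∀ b : S, r a b → b = a := by
  intro b hab
  have hab' : inv a * b = inv a * a := ha _ (hr.2 a b (inv a) hab)
  have hba' : inv b * a = inv a * a :=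
    calc inv b * a = inv (inv a * b) := by
          rw [InverseSemigroup.mul_inv_rev, InverseSemigroup.inv_inv]
      _ = inv a * a := by rw [hab', (isIdem_inv_mul a).inv_eq]
  have hbb : inv b * b = inv a * a := ha _ (hba' ▸ hr.2 a b (inv b) hab)
  exact NaturalLE.antisymm (naturalLE_of_inv_mul_eq (hba'.trans hbb.symm))
    (naturalLE_of_inv_mul_eq hab')
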